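/- Let f : ℝⁿ → ℝ ∪ {∞} be proper, lower semicontinuous and prox-bounded with threshold λ_f, λ ∈ (0, λ_f), and x̄ ∈ dom f with 0 ∈ ∂(e_λ f)(x̄). Assume (a) f satisfies the local Hölder error bound at x̄ with exponent γ > 0 and constant μ ≥ 2λ, and (b) there exists ε̄ > 0 such that for every x ∈ B(x̄, ε̄) with f(x) > f(x̄) there exists y ∈ P_λ f(x) with f(y) ≥ f(x̄). Then the Moreau envelope e_λ f satisfies the local Hölder error bound at x̄ with exponent max{2, γ} and constant 2^{max{1, γ-1}} μ. -/

import Mathlib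

open Filter Topology Set
open scoped ENNReal NNReal RealInnerProductSpace

noncomputable section

variable {E : Type*} [NormedAddCommGroup E] [InnerProductSpace ℝ E]

/-- Fréchet (regular) subdifferential of an `EReal`-valued function. -/
def fsubd (f : E → EReal) (x : E) : Set E :=
  {v | f x ≠ ⊤ ∧ f x ≠ ⊥ ∧ ∀ ε : ℝ, 0 < ε → ∀ᶠ y in 𝓝 x,
      (((f x).toReal + inner ℝ v (y - x) - ε * ‖y - x‖ : ℝ) : EReal) ≤ f y}

/-- Limiting (Mordukhovich) subdifferential. -/
def lsubd (f : E → EReal) (x : E) : Set E :=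
  {v | ∃ xs vs : ℕ → E, Tendsto xs atTop (𝓝 x) ∧
      Tendsto (fun k => f (xs k)) atTop (𝓝 (f x)) ∧
      Tendsto vs atTop (𝓝 v) ∧ ∀ k, vs k ∈ fsubd f (xs k)}

/-- Sublevel set `{z | f z ≤ a}`. -/
def slev (f : E → EReal) (a : EReal) : Set E := {z | f z ≤ a}

/-- `d(0, ∂ f x)`, with the convention that the distance to the empty set is `∞`. -/
def subdist (f : E → EReal) (x : E) : ℝ≥0∞ := EMetric.infEdist 0 (lsubd f x)

/-- Conversion of an extended real to `ℝ≥0∞` (truncating negative values). -/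
def toENN (a : EReal) : ℝ≥0∞ := if a = ⊤ then ⊤ else ENNReal.ofReal a.toReal

/-- Moreau envelope `e_λ f`. -/
def moreauEnv (f : E → EReal) (lam : ℝ) (x : E) : EReal :=
  ⨅ y, f y + ((‖y - x‖ ^ 2 / (2 * lam) : ℝ) : EReal)

/-- Proximal mapping `P_λ f` (set of minimizers). -/
def proxPts (f : E → EReal) (lam : ℝ) (x : E) : Set E :=
  {y | ∀ z, f y + ((‖y - x‖ ^ 2 / (2 * lam) : ℝ) : EReal)
        ≤ f z + ((‖z - x‖ ^ 2 / (2 * lam) : ℝ) : EReal)}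

/-- `f` is prox-bounded. -/
def ProxBdd (f : E → EReal) : Prop := ∃ lam > (0 : ℝ), ∃ x, moreauEnv f lam x ≠ ⊥

/-- Threshold `λ_f` of prox-boundedness. -/
def proxThreshold (f : E → EReal) : ℝ :=
  sSup {lam | 0 < lam ∧ ∃ x, moreauEnv f lam x ≠ ⊥}

/-- `f` is proper (never `-∞`, somewhere finite). -/
def IsProperFn (f : E → EReal) : Prop := (∃ x, f x ≠ ⊤) ∧ ∀ x, f x ≠ ⊥

/-- Kurdyka–Łojasiewicz property at `xb` with exponent `γ` and constant `μ`. -/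
def KLAt (f : E → EReal) (xb : E) (γ μ : ℝ) : Prop :=
  ∃ η > (0:ℝ), ∃ ν > (0:ℝ), ∀ x ∈ Metric.ball xb η,
    f xb < f x → f x < f xb + (ν : EReal) →
    toENN (f x - f xb) ^ γ ≤ ENNReal.ofReal μ * subdist f x

/-- Level-set subdifferential error bound at `xb` with exponent `γ` and constant `μ`. -/
def LSEBAt (f : E → EReal) (xb : E) (γ μ : ℝ) : Prop :=
  ∃ η > (0:ℝ), ∃ ν > (0:ℝ), ∀ x ∈ Metric.ball xb η,
    f xb < f x → f x < f xb + (ν : EReal) →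
    EMetric.infEdist x (slev f (f xb)) ^ γ ≤ ENNReal.ofReal μ * subdist f x

/-- Local Hölder error bound at `xb` with exponent `γ` and constant `μ`. -/
def LHEBAt (f : E → EReal) (xb : E) (γ μ : ℝ) : Prop :=
  ∃ η > (0:ℝ), ∀ x ∈ Metric.ball xb η, f xb < f x →
    EMetric.infEdist x (slev f (f xb)) ^ γ ≤ ENNReal.ofReal μ * toENN (f x - f xb)

/-- Uniformized KL property on `Ω`. -/
def uKL (f : E → EReal) (Ω : Set E) (γ μ : ℝ) : Prop :=
  ∃ ε > (0:ℝ), ∃ ν > (0:ℝ), ∀ xb ∈ Ω, ∀ x, Metric.infDist x Ω < ε →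
    f xb < f x → f x < f xb + (ν : EReal) →
    toENN (f x - f xb) ^ γ ≤ ENNReal.ofReal μ * subdist f x

/-- Uniformized level-set subdifferential error bound on `Ω`. -/
def uLSEB (f : E → EReal) (Ω : Set E) (γ μ : ℝ) : Prop :=
  ∃ ε > (0:ℝ), ∃ ν > (0:ℝ), ∀ xb ∈ Ω, ∀ x, Metric.infDist x Ω < ε →
    f xb < f x → f x < f xb + (ν : EReal) →
    EMetric.infEdist x (slev f (f xb)) ^ γ ≤ ENNReal.ofReal μ * subdist f x

/-- Uniformized Hölder error bound on `Ω`. -/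
def uHEB (f : E → EReal) (Ω : Set E) (γ μ : ℝ) : Prop :=
  ∃ ε > (0:ℝ), ∀ xb ∈ Ω, ∀ x, Metric.infDist x Ω < ε → f xb < f x →
    EMetric.infEdist x (slev f (f xb)) ^ γ ≤ ENNReal.ofReal μ * toENN (f x - f xb)

/-- Prox-regularity of `f` at `xb` for `vb` with constant `ρ`. -/
def ProxRegularAt (f : E → EReal) (xb vb : E) (ρ : ℝ) : Prop :=
  vb ∈ lsubd f xb ∧ ∃ ε > (0:ℝ), ∀ x v, v ∈ lsubd f x → v ∈ Metric.ball vb ε →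
    x ∈ Metric.ball xb ε → f x < f xb + (ε : EReal) → ∀ y ∈ Metric.ball xb ε,
      f x + (((inner ℝ v (y - x) : ℝ) - ρ / 2 * ‖y - x‖ ^ 2 : ℝ) : EReal) ≤ f y

/-!
Criticality `0 ∈ ∂(e_λ f)(x̄)` forces `e_λ f(x̄) = f(x̄)`: Fréchet subgradients `vₖ → 0` of
`e_λ f` at `xₖ → x̄` yield near-minimizers `pₖ → x̄` of the proximal problems, and lower
semicontinuity gives `f(x̄) ≤ lim e_λ f(xₖ)`. Hence `lev_{≤f(x̄)} f ⊆ lev_{≤e_λ f(x̄)} e_λ f`.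
For `x` near `x̄` take `y ∈ P_λ f(x)` with `f(y) ≥ f(x̄)`: then
`e_λ f(x) - e_λ f(x̄) = (f(y) - f(x̄)) + ‖x - y‖² / (2λ)` is a sum of two nonnegative terms, while
`d(x, lev e_λ f) ≤ d(y, lev f) + ‖x - y‖`. The error bound of `f` at `y` controls the first
distance by the first term, `2λ ≤ μ` the second by the second, and
`(a + b)^s ≤ 2^(s-1) (a^s + b^s)` combines them.
-/

namespace ENNReal

theorem rpow_le_of_rpow_le_of_le_one {a t : ℝ≥0∞} {p s : ℝ} (hp : 0 < p) (hps : p ≤ s)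
    (ha : a ^ p ≤ t) (ht : t ≤ 1) : a ^ s ≤ t :=
  calc a ^ s = (a ^ p) ^ (s / p) := by rw [← ENNReal.rpow_mul, mul_div_cancel₀ s hp.ne']
    _ ≤ t ^ (s / p) := ENNReal.rpow_le_rpow ha (div_nonneg (hp.le.trans hps) hp.le)
    _ ≤ t ^ (1 : ℝ) := ENNReal.rpow_le_rpow_of_exponent_ge ht ((one_le_div hp).2 hps)
    _ = t := ENNReal.rpow_one t

theorem add_rpow_le_of_rpow_le {a b t u : ℝ≥0∞} {p q s : ℝ} (hp : 0 < p) (hq : 0 < q)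
    (hps : p ≤ s) (hqs : q ≤ s) (hs : 1 ≤ s) (ha : a ^ p ≤ t) (hb : b ^ q ≤ u)
    (htu : t + u ≤ 1) : (a + b) ^ s ≤ 2 ^ (s - 1) * (t + u) :=
  (rpow_add_le_mul_rpow_add_rpow a b hs).trans <| mul_le_mul_right (add_le_add
    (rpow_le_of_rpow_le_of_le_one hp hps ha (le_self_add.trans htu))
    (rpow_le_of_rpow_le_of_le_one hq hqs hb (le_add_self.trans htu))) _

end ENNReal

theorem toENN_coe (r : ℝ) : toENN (r : EReal) = ENNReal.ofReal r := by
  simp [toENN]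

section Moreau

variable {X : Type*} [NormedAddCommGroup X] {f : X → EReal} {lam : ℝ}

theorem moreauEnv_le (f : X → EReal) (lam : ℝ) (x z : X) :
    moreauEnv f lam x ≤ f z + ((‖z - x‖ ^ 2 / (2 * lam) : ℝ) : EReal) :=
  iInf_le _ z

theorem moreauEnv_le_self (f : X → EReal) (lam : ℝ) (x : X) : moreauEnv f lam x ≤ f x := by
  simpa using moreauEnv_le f lam x x

theorem moreauEnv_eq_of_mem_proxPts {x y : X} (hy : y ∈ proxPts f lam x) :
    moreauEnv f lam x = f y + ((‖y - x‖ ^ 2 / (2 * lam) : ℝ) : EReal) :=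
  le_antisymm (moreauEnv_le f lam x y) (le_iInf hy)

theorem slev_subset_slev_moreauEnv (f : X → EReal) (lam : ℝ) (a : EReal) :
    slev f a ⊆ slev (moreauEnv f lam) a :=
  fun z hz => (moreauEnv_le_self f lam z).trans hz

theorem exists_coe_of_mem_proxPts {x y z : X} (hy : y ∈ proxPts f lam x) (hz : f z ≠ ⊤)
    (hz' : f z ≠ ⊥) (hzy : f z ≤ f y) :
    ∃ F G : ℝ, f z = F ∧ f y = G ∧ F ≤ G ∧
      G + ‖y - x‖ ^ 2 / (2 * lam) ≤ F + ‖z - x‖ ^ 2 / (2 * lam) := by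
  obtain ⟨F, hF⟩ : ∃ F : ℝ, f z = F := ⟨_, (EReal.coe_toReal hz hz').symm⟩
  have hyz := hy z
  have hytop : f y ≠ ⊤ := by
    rintro hytop
    rw [hytop, hF, EReal.top_add_of_ne_bot (EReal.coe_ne_bot _), ← EReal.coe_add] at hyz
    exact EReal.coe_ne_top _ (top_le_iff.1 hyz)
  obtain ⟨G, hG⟩ : ∃ G : ℝ, f y = G :=
    ⟨_, (EReal.coe_toReal hytop (ne_bot_of_le_ne_bot hz' hzy)).symm⟩
  rw [hF, hG] at hzy hyz
  exact ⟨F, G, hF, hG, EReal.coe_le_coe_iff.1 hzy, by exact_mod_cast hyz⟩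

theorem LHEBAt.exists_forall_mem_ball {xb : X} {γ μ : ℝ} (h : LHEBAt f xb γ μ) (hγ : 0 < γ) :
    ∃ η > (0 : ℝ), ∀ z ∈ Metric.ball xb η, Metric.infEDist z (slev f (f xb)) ^ γ ≤
      ENNReal.ofReal μ * toENN (f z - f xb) := by
  obtain ⟨η, hη, hEB⟩ := h
  refine ⟨η, hη, fun z hz => ?_⟩
  by_cases hzxb : f xb < f z
  · exact hEB z hz hzxb
  · rw [Metric.infEDist_zero_of_mem (show z ∈ slev f (f xb) from not_lt.1 hzxb),
      ENNReal.zero_rpow_of_pos hγ]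
    exact zero_le

/-- `dist x xb ^ 2 ≤ 2λ/μ` keeps both `μ (f y - f xb)` and `μ ‖x - y‖² / (2λ)` below `1`, so raising
the exponents `γ` and `2` to `max 2 γ` only lowers the bounds. -/
theorem rpow_infEDist_slev_moreauEnv_le {xb x y : X} {γ μ η : ℝ} (hlam : 0 < lam)
    (hγ : 0 < γ) (hμ : 2 * lam ≤ μ) (hfix : moreauEnv f lam xb = f xb) (hxb : f xb ≠ ⊤)
    (hxb' : f xb ≠ ⊥)
    (hEB : ∀ z ∈ Metric.ball xb η, Metric.infEDist z (slev f (f xb)) ^ γ ≤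
      ENNReal.ofReal μ * toENN (f z - f xb))
    (hxη : dist x xb < η / 2) (hxμ : dist x xb ^ 2 ≤ 2 * lam / μ)
    (hy : y ∈ proxPts f lam x) (hfy : f xb ≤ f y) :
    Metric.infEDist x (slev (moreauEnv f lam) (moreauEnv f lam xb)) ^ max 2 γ ≤
      ENNReal.ofReal (2 ^ max 1 (γ - 1) * μ) *
        toENN (moreauEnv f lam x - moreauEnv f lam xb) := by
  obtain ⟨F, G, hF, hG, hFG, hGF⟩ := exists_coe_of_mem_proxPts hy hxb hxb' hfy
  rw [← dist_eq_norm, ← dist_eq_norm, dist_comm xb] at hGF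
  set B := dist y x ^ 2 / (2 * lam)
  have hμ0 : 0 < μ := by linarith
  have hyx : dist y x ≤ dist x xb := by
    refine (pow_le_pow_iff_left₀ dist_nonneg dist_nonneg two_ne_zero).1 ?_
    rw [← div_le_div_iff_of_pos_right (by positivity : (0 : ℝ) < 2 * lam)]
    linarith
  have hy_ball : y ∈ Metric.ball xb η := by
    rw [Metric.mem_ball]
    linarith [dist_triangle y x xb]
  have hΔ : μ * (G - F) + μ * B ≤ 1 := by
    have : dist x xb ^ 2 / (2 * lam) ≤ 1 / μ := by
      rw [div_le_iff₀ (by positivity), div_mul_eq_mul_div, one_mul]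
      exact hxμ
    have := mul_le_mul_of_nonneg_left (by linarith : G - F + B ≤ 1 / μ) hμ0.le
    rwa [mul_one_div_cancel hμ0.ne', mul_add] at this
  have hyS : Metric.infEDist y (slev f (f xb)) ^ γ ≤ ENNReal.ofReal (μ * (G - F)) := by
    refine (hEB y hy_ball).trans_eq ?_
    rw [hF, hG, ← EReal.coe_sub, toENN_coe, ENNReal.ofReal_mul hμ0.le]
  have hxy : edist x y ^ (2 : ℝ) ≤ ENNReal.ofReal (μ * B) := by
    rw [edist_dist, ENNReal.ofReal_rpow_of_nonneg dist_nonneg zero_le_two, Real.rpow_two,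
      dist_comm]
    refine ENNReal.ofReal_le_ofReal ?_
    have : dist y x ^ 2 = 2 * lam * B := by
      change _ = 2 * lam * (dist y x ^ 2 / (2 * lam)); field_simp
    nlinarith [show 0 ≤ B by positivity]
  have htri : Metric.infEDist x (slev (moreauEnv f lam) (moreauEnv f lam xb)) ≤
      Metric.infEDist y (slev f (f xb)) + edist x y :=
    (Metric.infEDist_anti (hfix ▸ slev_subset_slev_moreauEnv f lam (f xb))).trans
      Metric.infEDist_le_infEDist_add_edist
  have hgap : toENN (moreauEnv f lam x - moreauEnv f lam xb) = ENNReal.ofReal (G + B - F) := by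
    rw [moreauEnv_eq_of_mem_proxPts hy, hfix, hF, hG, ← dist_eq_norm, ← EReal.coe_add,
      ← EReal.coe_sub, toENN_coe]
  have hexp : max 1 (γ - 1) = max 2 γ - 1 := by rw [← max_sub_sub_right]; norm_num
  have htwo : (2 : ℝ≥0∞) ^ (max 2 γ - 1) = ENNReal.ofReal (2 ^ (max 2 γ - 1)) := by
    rw [← ENNReal.ofReal_rpow_of_pos two_pos, ENNReal.ofReal_ofNat]
  calc _ ≤ (Metric.infEDist y (slev f (f xb)) + edist x y) ^ max 2 γ :=
        ENNReal.rpow_le_rpow htri (by positivity)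
    _ ≤ 2 ^ (max 2 γ - 1) * (ENNReal.ofReal (μ * (G - F)) + ENNReal.ofReal (μ * B)) :=
        ENNReal.add_rpow_le_of_rpow_le hγ two_pos (le_max_right _ _) (le_max_left _ _)
          (one_le_two.trans (le_max_left _ _)) hyS hxy
          (by rw [← ENNReal.ofReal_add (by nlinarith) (by positivity)]
              exact ENNReal.ofReal_le_one.2 hΔ)
    _ = _ := by
        rw [hgap, hexp, htwo, ← ENNReal.ofReal_add (by nlinarith) (by positivity),
          ← ENNReal.ofReal_mul (by positivity), ← ENNReal.ofReal_mul (by positivity)]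
        congr 1
        ring

end Moreau

theorem norm_le_of_forall_inner_le {w : E} {r c : ℝ} (hr : 0 < r) (hc : 0 ≤ c)
    (h : ∀ u : E, ‖u‖ = r → ⟪w, u⟫ ≤ r * c) : ‖w‖ ≤ c := by
  rcases eq_or_ne w 0 with rfl | hw
  · simpa using hc
  have hw' : 0 < ‖w‖ := norm_pos_iff.2 hw
  have hu : ‖(r / ‖w‖) • w‖ = r := by
    rw [norm_smul, Real.norm_of_nonneg (by positivity), div_mul_cancel₀ _ hw'.ne']
  refine le_of_mul_le_mul_left ?_ hr
  calc r * ‖w‖ = ⟪w, (r / ‖w‖) • w⟫ := by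
        rw [real_inner_smul_right, real_inner_self_eq_norm_sq]; field_simp
    _ ≤ r * c := h _ hu

section Subdifferential

variable {f : E → EReal} {lam : ℝ}

/-- A near-minimizer `p` of `f p + ‖p - x‖² / (2λ)` satisfies `p - x ≈ -λ v`: test the Fréchet
inequality of `v` on a small sphere around `x`, bounding `e_λ f` there by the value at `p`. -/
theorem exists_near_of_mem_fsubd_moreauEnv {x v : E} {ε : ℝ} (hlam : 0 < lam) (hε : 0 < ε)
    (hv : v ∈ fsubd (moreauEnv f lam) x) :
    ∃ p, f p ≤ moreauEnv f lam x + (ε : EReal) ∧ ‖p - x‖ ≤ lam * (‖v‖ + ε) := by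
  obtain ⟨hetop, hebot, hfrechet⟩ := hv
  obtain ⟨r₀, hr₀, hball⟩ := Metric.eventually_nhds_iff.1 (hfrechet (ε / 4) (by positivity))
  set r := min (r₀ / 2) (min 1 (lam * ε))
  have hr : 0 < r := by positivity
  have hrr₀ : r < r₀ := (min_le_left _ _).trans_lt (half_lt_self hr₀)
  have hr1 : r ≤ 1 := (min_le_right _ _).trans (min_le_left _ _)
  have hrε : r ≤ lam * ε := (min_le_right _ _).trans (min_le_right _ _)
  obtain ⟨ex, hex⟩ : ∃ ex : ℝ, moreauEnv f lam x = ex :=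
    ⟨_, (EReal.coe_toReal hetop hebot).symm⟩
  obtain ⟨p, hp⟩ := iInf_lt_iff.1 (show moreauEnv f lam x < ((ex + ε / 4 * r : ℝ) : EReal) by
    rw [hex, EReal.coe_lt_coe_iff]; nlinarith)
  have hptop : f p ≠ ⊤ := fun h => by
    rw [h, EReal.top_add_of_ne_bot (EReal.coe_ne_bot _)] at hp
    exact not_top_lt hp
  have hpbot : f p ≠ ⊥ := fun h => by
    have := moreauEnv_le f lam x p
    rw [h, EReal.bot_add] at this
    exact hebot (le_bot_iff.1 this)
  obtain ⟨P, hP⟩ : ∃ P : ℝ, f p = P := ⟨_, (EReal.coe_toReal hptop hpbot).symm⟩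
  rw [hP] at hp
  have hPex : P + ‖p - x‖ ^ 2 / (2 * lam) < ex + ε / 4 * r := by exact_mod_cast hp
  have hsphere : ∀ u : E, ‖u‖ = r → ⟪v + lam⁻¹ • (p - x), u⟫ ≤ r * ε := by
    intro u hu
    have hfr : ex + ⟪v, u⟫ - ε / 4 * r ≤ P + ‖p - x - u‖ ^ 2 / (2 * lam) := by
      have := (hball (show dist (x + u) x < r₀ by simpa [hu] using hrr₀)).trans
        (moreauEnv_le f lam (x + u) p)
      rw [hex, hP, add_sub_cancel_left, hu, sub_add_eq_sub_sub] at this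
      exact_mod_cast this
    rw [norm_sub_sq_real, hu] at hfr
    rw [inner_add_left, real_inner_smul_left]
    have hquad : r ^ 2 / (2 * lam) ≤ r * ε / 2 := by
      rw [div_le_iff₀ (by positivity)]; nlinarith
    have : ⟪p - x, u⟫ / lam ≤ ε / 2 * r + r ^ 2 / (2 * lam) - ⟪v, u⟫ := by
      have hexpand : (‖p - x‖ ^ 2 - 2 * ⟪p - x, u⟫ + r ^ 2) / (2 * lam)
          = ‖p - x‖ ^ 2 / (2 * lam) - ⟪p - x, u⟫ / lam + r ^ 2 / (2 * lam) := by
        field_simp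
      linarith
    rw [inv_mul_eq_div]
    linarith
  have hw := norm_le_of_forall_inner_le hr hε.le hsphere
  refine ⟨p, ?_, ?_⟩
  · rw [hex, hP, ← EReal.coe_add, EReal.coe_le_coe_iff]
    nlinarith [show 0 ≤ ‖p - x‖ ^ 2 / (2 * lam) by positivity]
  · calc ‖p - x‖ = lam * ‖(v + lam⁻¹ • (p - x)) - v‖ := by
          rw [add_sub_cancel_left, norm_smul, Real.norm_of_nonneg (inv_nonneg.2 hlam.le),
            mul_inv_cancel_left₀ hlam.ne']
      _ ≤ lam * (‖v‖ + ε) := by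
          gcongr
          exact (norm_sub_le _ _).trans (by linarith)

theorem le_moreauEnv_of_zero_mem_lsubd (hlsc : LowerSemicontinuous f) (hlam : 0 < lam)
    {xb : E} (hcrit : (0 : E) ∈ lsubd (moreauEnv f lam) xb) : f xb ≤ moreauEnv f lam xb := by
  obtain ⟨xs, vs, hxs, hes, hvs, hfs⟩ := hcrit
  choose p hpf hpx using fun k : ℕ =>
    exists_near_of_mem_fsubd_moreauEnv hlam (Nat.one_div_pos_of_nat (n := k)) (hfs k)
  have hδ : Tendsto (fun k : ℕ => (1 : ℝ) / (k + 1)) atTop (𝓝 0) :=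
    tendsto_one_div_add_atTop_nhds_zero_nat
  have hp : Tendsto p atTop (𝓝 xb) := by
    rw [tendsto_iff_dist_tendsto_zero]
    refine squeeze_zero (fun _ => dist_nonneg) (fun k => (dist_triangle _ (xs k) _).trans
      (add_le_add_left (dist_eq_norm (p k) (xs k) ▸ hpx k) _)) ?_
    simpa using ((hvs.norm.add hδ).const_mul lam).add (tendsto_iff_dist_tendsto_zero.1 hxs)
  have hbound : Tendsto (fun k => moreauEnv f lam (xs k) + ((1 / (k + 1) : ℝ) : EReal)) atTop
      (𝓝 (moreauEnv f lam xb)) := by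
    have hδ' : Tendsto (fun k : ℕ => ((1 / (k + 1) : ℝ) : EReal)) atTop (𝓝 0) := by
      simpa using EReal.tendsto_coe.2 hδ
    simpa [Function.comp_def] using (EReal.continuousAt_add (p := (moreauEnv f lam xb, 0))
      (by simp) (by simp)).tendsto.comp (hes.prodMk_nhds hδ')
  refine le_of_forall_lt_imp_le_of_dense fun c hc => ge_of_tendsto hbound ?_
  filter_upwards [hp.eventually (hlsc xb c hc)] with k hk using (hk.trans_le (hpf k)).le

theorem moreauEnv_eq_self_of_zero_mem_lsubd (hlsc : LowerSemicontinuous f) (hlam : 0 < lam)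
    {xb : E} (hcrit : (0 : E) ∈ lsubd (moreauEnv f lam) xb) : moreauEnv f lam xb = f xb :=
  (moreauEnv_le_self f lam xb).antisymm (le_moreauEnv_of_zero_mem_lsubd hlsc hlam hcrit)

end Subdifferential

theorem stmt11_general {n : ℕ} (f : EuclideanSpace ℝ (Fin n) → EReal)
    (hproper : IsProperFn f) (hlsc : LowerSemicontinuous f)
    (lam : ℝ) (hlam : lam ∈ Set.Ioo 0 (proxThreshold f))
    (xb : EuclideanSpace ℝ (Fin n)) (hdom : f xb ≠ ⊤)
    (hcrit : (0 : EuclideanSpace ℝ (Fin n)) ∈ lsubd (moreauEnv f lam) xb)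
    (γ μ : ℝ) (hγ : 0 < γ) (hμ : 2 * lam ≤ μ) (ha : LHEBAt f xb γ μ)
    (hb : ∃ εb > (0:ℝ), ∀ x ∈ Metric.ball xb εb, f xb < f x →
      ∃ y ∈ proxPts f lam x, f xb ≤ f y) :
    LHEBAt (moreauEnv f lam) xb (max 2 γ) ((2:ℝ) ^ (max 1 (γ - 1)) * μ) := by
  obtain ⟨hlam0, -⟩ := hlam
  have hfix := moreauEnv_eq_self_of_zero_mem_lsubd hlsc hlam0 hcrit
  obtain ⟨η, hη, hEB⟩ := ha.exists_forall_mem_ball hγ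
  obtain ⟨εb, hεb, hprox⟩ := hb
  have hμ0 : 0 < μ := by linarith
  refine ⟨min εb (min (η / 2) √(2 * lam / μ)), by positivity, fun x hx hlt => ?_⟩
  rw [Metric.mem_ball, lt_min_iff, lt_min_iff] at hx
  obtain ⟨hxε, hxη, hxμ⟩ := hx
  obtain ⟨y, hy, hfy⟩ := hprox x hxε (hfix ▸ hlt.trans_le (moreauEnv_le_self f lam x))
  exact rpow_infEDist_slev_moreauEnv_le hlam0 hγ hμ hfix hdom (hproper.2 xb) hEB hxη
    ((Real.lt_sqrt dist_nonneg).1 hxμ).le hy hfy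

theorem stmt11 {n : ℕ} (f : EuclideanSpace ℝ (Fin n) → EReal)
    (hproper : IsProperFn f) (hlsc : LowerSemicontinuous f) (hpb : ProxBdd f)
    (lam : ℝ) (hlam : lam ∈ Set.Ioo 0 (proxThreshold f))
    (xb : EuclideanSpace ℝ (Fin n)) (hdom : f xb ≠ ⊤)
    (hcrit : (0 : EuclideanSpace ℝ (Fin n)) ∈ lsubd (moreauEnv f lam) xb)
    (γ μ : ℝ) (hγ : 0 < γ) (hμ : 2 * lam ≤ μ) (ha : LHEBAt f xb γ μ)
    (hb : ∃ εb > (0:ℝ), ∀ x ∈ Metric.ball xb εb, f xb < f x →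
      ∃ y ∈ proxPts f lam x, f xb ≤ f y) :
    LHEBAt (moreauEnv f lam) xb (max 2 γ) ((2:ℝ) ^ (max 1 (γ - 1)) * μ) :=
  stmt11_general f hproper hlsc lam hlam xb hdom hcrit γ μ hγ hμ ha hb
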